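/- (Theorem 2, high comparable costs regime) Fix G > 0 and costs C_i, C_j > 0 with C_i + C_j > 1 and |C_j − C_i| ≤ 1. Then the pair B_i* = (1 + C_j − C_i)·G·e^{−(C_i+C_j+3)/2}/2 and B_j* = (1 + C_i − C_j)·G·e^{−(C_i+C_j+3)/2}/2 is the unique Nash equilibrium of the investment game, and the equilibrium profits are π_i = ((1 + C_j − C_i)/2)²·G·e^{−(C_i+C_j+3)/2} and π_j = ((1 + C_i − C_j)/2)²·G·e^{−(C_i+C_j+3)/2}. -/

import Mathlib

/-- Operator profit in the high-SNR investment game: the operator with unit cost `C`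
leasing `B` while the competitor leases `B'` earns `B·(ln(G/(B + B')) − 1 − C)`. -/
noncomputable def invProfit (G C B B' : ℝ) : ℝ :=
  B * (Real.log (G / (B + B')) - 1 - C)

/-- `(Bi, Bj)` is a Nash equilibrium of the high-SNR investment game with coupled
strategy set `{(Bi, Bj) : Bi, Bj ≥ 0, Bi + Bj ≤ G·e^{−2}}`. -/
def IsInvestmentNE (G Ci Cj Bi Bj : ℝ) : Prop :=
  0 ≤ Bi ∧ 0 ≤ Bj ∧ Bi + Bj ≤ G * Real.exp (-2) ∧
  (∀ B : ℝ, 0 ≤ B → B ≤ G * Real.exp (-2) - Bj → invProfit G Ci B Bj ≤ invProfit G Ci Bi Bj) ∧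
  (∀ B : ℝ, 0 ≤ B → B ≤ G * Real.exp (-2) - Bi → invProfit G Cj B Bi ≤ invProfit G Cj Bj Bi)

/-!
With `S = B + B'`, the derivative of `B ↦ invProfit G C B B'` is the marginal profit
`log (G / S) - 1 - C - B / S`. At an equilibrium the total investment `S` is
positive (a lone operator gains by entering) and below the cap `G e^{-2}` (at the cap the
first-order conditions of the two operators contradict `Ci + Cj > 1`), so the marginal profit
of each operator vanishes; a zero investment is compatible with this only because
`|Cj - Ci| ≤ 1`. The two first-order conditions fix the shares `Bi / S = (1 + Cj - Ci) / 2`,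
`Bj / S = (1 + Ci - Cj) / 2` and hence `log (G / S) = (Ci + Cj + 3) / 2`. Conversely, by
`log x ≤ x - 1` a zero of the marginal profit is a global best response.
-/

open Real Set

theorem IsMaxOn.hasDerivAt_mul_sub_nonpos {f : ℝ → ℝ} {s : Set ℝ} {a b f' : ℝ}
    (h : IsMaxOn f s a) (hs : Convex ℝ s) (ha : a ∈ s) (hb : b ∈ s) (hf : HasDerivAt f f' a) :
    f' * (b - a) ≤ 0 := by
  simpa [mul_comm] using h.localize.hasFDerivWithinAt_nonpos hf.hasFDerivAt.hasFDerivWithinAt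
    (sub_mem_posTangentConeAt_of_segment_subset (hs.segment_subset ha hb))

theorem log_div_mul_exp {G : ℝ} (hG : G ≠ 0) (a : ℝ) : log (G / (G * exp a)) = -a := by
  rw [div_mul_cancel_left₀ hG, log_inv, log_exp]

noncomputable def marginalProfit (G C B B' : ℝ) : ℝ :=
  log (G / (B + B')) - 1 - C - B / (B + B')

theorem invProfit_eq_mul_add_marginalProfit (G C B B' : ℝ) :
    invProfit G C B B' = B * (B / (B + B') + marginalProfit G C B B') := by
  unfold invProfit marginalProfit
  ring

theorem hasDerivAt_invProfit {G : ℝ} (C B' : ℝ) {B : ℝ} (hG : G ≠ 0) (hS : B + B' ≠ 0) :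
    HasDerivAt (fun b ↦ invProfit G C b B') (marginalProfit G C B B') B := by
  have hlog := ((hasDerivAt_const B G).fun_div ((hasDerivAt_id' B).add_const B') hS).log
    (div_ne_zero hG hS)
  refine ((hasDerivAt_id' B).fun_mul ((hlog.sub_const 1).sub_const C)).congr_deriv ?_
  simp only [marginalProfit]
  field_simp
  ring

/-- By `log x ≤ x - 1`, the profit of `B₀` exceeds that of `B` by at least
`B' (B₀ - B)² / ((B₀ + B') (B + B'))`. -/
theorem invProfit_le_of_marginalProfit_eq_zero {G C B' B₀ B : ℝ} (hG : G ≠ 0) (hB' : 0 ≤ B')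
    (hS : 0 < B₀ + B') (h : marginalProfit G C B₀ B' = 0) (hB : 0 ≤ B) :
    invProfit G C B B' ≤ invProfit G C B₀ B' := by
  have hB₀ : invProfit G C B₀ B' = B₀ * (B₀ / (B₀ + B')) := by
    rw [invProfit_eq_mul_add_marginalProfit, h, add_zero]
  rcases (add_nonneg hB hB').eq_or_lt with hT | hT
  · obtain rfl : B = 0 := by linarith
    rw [hB₀, invProfit, zero_mul, ← mul_div_assoc]
    exact div_nonneg (mul_self_nonneg B₀) hS.le
  have hlog : log (G / (B + B')) = log (G / (B₀ + B')) + log ((B₀ + B') / (B + B')) := by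
    rw [log_div hG hT.ne', log_div hG hS.ne', log_div hS.ne' hT.ne']
    ring
  have hfoc : log (G / (B₀ + B')) - 1 - C = B₀ / (B₀ + B') := by
    unfold marginalProfit at h
    linarith
  have hgap :
      B₀ * (B₀ / (B₀ + B')) - (B * (B₀ / (B₀ + B')) + B * ((B₀ + B') / (B + B') - 1)) =
        B' * (B₀ - B) ^ 2 / ((B₀ + B') * (B + B')) := by
    field_simp
    ring
  calc invProfit G C B B'
      = B * (log (G / (B₀ + B')) - 1 - C) + B * log ((B₀ + B') / (B + B')) := by
        rw [invProfit, hlog]; ring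
    _ ≤ B * (B₀ / (B₀ + B')) + B * ((B₀ + B') / (B + B') - 1) := by
        rw [hfoc]
        gcongr
        exact log_le_sub_one_of_pos (by positivity)
    _ ≤ invProfit G C B₀ B' := by
        rw [hB₀]
        have : 0 ≤ B' * (B₀ - B) ^ 2 / ((B₀ + B') * (B + B')) := by positivity
        linarith

theorem marginalProfit_eq_zero_iff {G Ci Cj Bi Bj : ℝ} (hG : 0 < G) (hS : 0 < Bi + Bj) :
    marginalProfit G Ci Bi Bj = 0 ∧ marginalProfit G Cj Bj Bi = 0 ↔
      Bi = (1 + Cj - Ci) * G * exp (-((Ci + Cj + 3) / 2)) / 2 ∧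
      Bj = (1 + Ci - Cj) * G * exp (-((Ci + Cj + 3) / 2)) / 2 := by
  unfold marginalProfit
  rw [add_comm Bj Bi]
  constructor
  · rintro ⟨hi, hj⟩
    set L := log (G / (Bi + Bj)) with hL
    have hxi : Bi / (Bi + Bj) = L - 1 - Ci := by linarith
    have hxj : Bj / (Bi + Bj) = L - 1 - Cj := by linarith
    have hL' : L = (Ci + Cj + 3) / 2 := by
      have hshare : Bi / (Bi + Bj) + Bj / (Bi + Bj) = 1 := by
        rw [← add_div, div_self hS.ne']
      linarith
    have hsum : Bi + Bj = G * exp (-L) := by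
      rw [exp_neg, hL, exp_log (by positivity)]
      field_simp
    have hBi : Bi = (L - 1 - Ci) * (Bi + Bj) := by rw [← hxi, div_mul_cancel₀ _ hS.ne']
    have hBj : Bj = (L - 1 - Cj) * (Bi + Bj) := by rw [← hxj, div_mul_cancel₀ _ hS.ne']
    rw [← hL']
    constructor
    · linear_combination hBi + (Bi + Bj) * hL' + (1 + Cj - Ci) / 2 * hsum
    · linear_combination hBj + (Bi + Bj) * hL' + (1 + Ci - Cj) / 2 * hsum
  · rintro ⟨rfl, rfl⟩
    have hsum : (1 + Cj - Ci) * G * exp (-((Ci + Cj + 3) / 2)) / 2 +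
        (1 + Ci - Cj) * G * exp (-((Ci + Cj + 3) / 2)) / 2 = G * exp (-((Ci + Cj + 3) / 2)) := by
      ring
    rw [hsum, log_div_mul_exp hG.ne']
    constructor <;> field_simp <;> ring

namespace IsInvestmentNE

variable {G Ci Cj Bi Bj : ℝ}

theorem symm (h : IsInvestmentNE G Ci Cj Bi Bj) : IsInvestmentNE G Cj Ci Bj Bi := by
  obtain ⟨hBi, hBj, hcap, hbest_i, hbest_j⟩ := h
  exact ⟨hBj, hBi, by linarith, hbest_j, hbest_i⟩

theorem isMaxOn (h : IsInvestmentNE G Ci Cj Bi Bj) :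
    IsMaxOn (fun B ↦ invProfit G Ci B Bj) (Icc 0 (G * exp (-2) - Bj)) Bi :=
  fun B hB ↦ h.2.2.2.1 B hB.1 hB.2

theorem mem_Icc (h : IsInvestmentNE G Ci Cj Bi Bj) : Bi ∈ Icc 0 (G * exp (-2) - Bj) :=
  ⟨h.1, by linarith [h.2.2.1]⟩

theorem marginalProfit_nonneg (h : IsInvestmentNE G Ci Cj Bi Bj) (hG : G ≠ 0) (hBi : 0 < Bi) :
    0 ≤ marginalProfit G Ci Bi Bj := by
  have := h.isMaxOn.hasDerivAt_mul_sub_nonpos (convex_Icc _ _) h.mem_Icc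
    (left_mem_Icc.2 (h.mem_Icc.1.trans h.mem_Icc.2))
    (hasDerivAt_invProfit Ci Bj hG (by linarith [h.2.1]))
  nlinarith

theorem marginalProfit_nonpos (h : IsInvestmentNE G Ci Cj Bi Bj) (hG : G ≠ 0)
    (hS : 0 < Bi + Bj) (hlt : Bi + Bj < G * exp (-2)) : marginalProfit G Ci Bi Bj ≤ 0 := by
  have := h.isMaxOn.hasDerivAt_mul_sub_nonpos (convex_Icc _ _) h.mem_Icc
    (right_mem_Icc.2 (h.mem_Icc.1.trans h.mem_Icc.2)) (hasDerivAt_invProfit Ci Bj hG hS.ne')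
  nlinarith

/-- Alone in the market, an operator earns `G e^{-(2+C)} > 0` by leasing `G e^{-(2+C)}`. -/
theorem add_pos (h : IsInvestmentNE G Ci Cj Bi Bj) (hG : 0 < G) (hCi : 0 ≤ Ci) :
    0 < Bi + Bj := by
  obtain ⟨hBi, hBj, -, hbest, -⟩ := h
  by_contra! hS
  obtain rfl : Bi = 0 := by linarith
  obtain rfl : Bj = 0 := by linarith
  have hdev := hbest (G * exp (-(2 + Ci))) (by positivity) (by
    rw [sub_zero]
    gcongr
    linarith)
  rw [invProfit, add_zero, log_div_mul_exp hG.ne', invProfit, zero_mul] at hdev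
  have : 0 < G * exp (-(2 + Ci)) := by positivity
  nlinarith

/-- If `Bi = 0` at the cap, operator `j` holds the whole market `G e^{-2}`, where its marginal
profit is `-Cj < 0`. -/
theorem pos_of_add_eq (h : IsInvestmentNE G Ci Cj Bi Bj) (hG : 0 < G) (hCj : 0 < Cj)
    (hcap : Bi + Bj = G * exp (-2)) : 0 < Bi := by
  refine h.1.lt_of_ne fun hBi ↦ ?_
  subst hBi
  have hBj : 0 < Bj := by rw [zero_add] at hcap; rw [hcap]; positivity
  have := h.symm.marginalProfit_nonneg hG.ne' hBj
  rw [marginalProfit, add_zero, div_self hBj.ne', ← zero_add Bj, hcap,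
    log_div_mul_exp hG.ne'] at this
  linarith

theorem add_lt (h : IsInvestmentNE G Ci Cj Bi Bj) (hG : 0 < G) (hCi : 0 < Ci) (hCj : 0 < Cj)
    (hsum : 1 < Ci + Cj) : Bi + Bj < G * exp (-2) := by
  refine h.2.2.1.lt_of_ne fun hcap ↦ ?_
  have hBi := h.pos_of_add_eq hG hCj hcap
  have hBj := h.symm.pos_of_add_eq hG hCi (by rw [add_comm, hcap])
  have hi := h.marginalProfit_nonneg hG.ne' hBi
  have hj := h.symm.marginalProfit_nonneg hG.ne' hBj
  rw [marginalProfit, hcap, log_div_mul_exp hG.ne'] at hi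
  rw [marginalProfit, add_comm, hcap, log_div_mul_exp hG.ne'] at hj
  have hshare : Bi / (G * exp (-2)) + Bj / (G * exp (-2)) = 1 := by
    rw [← add_div, hcap, div_self (by positivity)]
  linarith

/-- When `Bi = 0`, the first-order condition of `j` pins `log (G / Bj) = 2 + Cj`, so the
marginal profit of `i` is `1 + Cj - Ci ≥ 0`. -/
theorem marginalProfit_eq_zero (h : IsInvestmentNE G Ci Cj Bi Bj) (hG : 0 < G) (hCi : 0 < Ci)
    (hCj : 0 < Cj) (hsum : 1 < Ci + Cj) (hC : Ci ≤ 1 + Cj) : marginalProfit G Ci Bi Bj = 0 := by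
  have hS := h.add_pos hG hCi.le
  have hlt := h.add_lt hG hCi hCj hsum
  refine (h.marginalProfit_nonpos hG.ne' hS hlt).antisymm ?_
  rcases h.1.eq_or_lt with rfl | hBi
  · rw [zero_add] at hS hlt
    have hj := (h.symm.marginalProfit_nonpos hG.ne' (by linarith) (by linarith)).antisymm
      (h.symm.marginalProfit_nonneg hG.ne' hS)
    rw [marginalProfit, add_zero, div_self hS.ne'] at hj
    rw [marginalProfit, zero_add, zero_div]
    linarith
  · exact h.marginalProfit_nonneg hG.ne' hBi

end IsInvestmentNE

theorem isInvestmentNE_of_marginalProfit_eq_zero {G Ci Cj Bi Bj : ℝ} (hG : G ≠ 0)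
    (hBi : 0 ≤ Bi) (hBj : 0 ≤ Bj) (hS : 0 < Bi + Bj) (hcap : Bi + Bj ≤ G * exp (-2))
    (hi : marginalProfit G Ci Bi Bj = 0) (hj : marginalProfit G Cj Bj Bi = 0) :
    IsInvestmentNE G Ci Cj Bi Bj :=
  ⟨hBi, hBj, hcap,
    fun _ hB _ ↦ invProfit_le_of_marginalProfit_eq_zero hG hBj hS hi hB,
    fun _ hB _ ↦ invProfit_le_of_marginalProfit_eq_zero hG hBi (by linarith) hj hB⟩

/-- Theorem 2, high comparable costs regime (`Ci + Cj > 1`, `|Cj − Ci| ≤ 1`):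
`Bi* = (1 + Cj − Ci)·G·e^{−(Ci+Cj+3)/2}/2`, `Bj* = (1 + Ci − Cj)·G·e^{−(Ci+Cj+3)/2}/2`
is the unique Nash equilibrium of the investment game, with profits
`((1 + Cj − Ci)/2)²·G·e^{−(Ci+Cj+3)/2}` and `((1 + Ci − Cj)/2)²·G·e^{−(Ci+Cj+3)/2}`. -/
theorem stmt_9 (G Ci Cj : ℝ) (hG : 0 < G) (hCi : 0 < Ci) (hCj : 0 < Cj)
    (hsum : 1 < Ci + Cj) (hdiff : |Cj - Ci| ≤ 1) :
    IsInvestmentNE G Ci Cj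
      ((1 + Cj - Ci) * G * Real.exp (-((Ci + Cj + 3) / 2)) / 2)
      ((1 + Ci - Cj) * G * Real.exp (-((Ci + Cj + 3) / 2)) / 2) ∧
    (∀ Bi Bj : ℝ, IsInvestmentNE G Ci Cj Bi Bj →
      Bi = (1 + Cj - Ci) * G * Real.exp (-((Ci + Cj + 3) / 2)) / 2 ∧
      Bj = (1 + Ci - Cj) * G * Real.exp (-((Ci + Cj + 3) / 2)) / 2) ∧
    invProfit G Ci
        ((1 + Cj - Ci) * G * Real.exp (-((Ci + Cj + 3) / 2)) / 2)
        ((1 + Ci - Cj) * G * Real.exp (-((Ci + Cj + 3) / 2)) / 2)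
      = ((1 + Cj - Ci) / 2) ^ 2 * G * Real.exp (-((Ci + Cj + 3) / 2)) ∧
    invProfit G Cj
        ((1 + Ci - Cj) * G * Real.exp (-((Ci + Cj + 3) / 2)) / 2)
        ((1 + Cj - Ci) * G * Real.exp (-((Ci + Cj + 3) / 2)) / 2)
      = ((1 + Ci - Cj) / 2) ^ 2 * G * Real.exp (-((Ci + Cj + 3) / 2)) := by
  obtain ⟨hCj_le, hCi_le⟩ := abs_le.mp hdiff
  set E := exp (-((Ci + Cj + 3) / 2))
  have hE : 0 < E := exp_pos _
  have hsum_eq : (1 + Cj - Ci) * G * E / 2 + (1 + Ci - Cj) * G * E / 2 = G * E := by ring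
  have hS : 0 < (1 + Cj - Ci) * G * E / 2 + (1 + Ci - Cj) * G * E / 2 := by
    rw [hsum_eq]; positivity
  obtain ⟨hi, hj⟩ := (marginalProfit_eq_zero_iff hG hS).2 ⟨rfl, rfl⟩
  refine ⟨?_, fun Bi Bj h ↦ (marginalProfit_eq_zero_iff hG (h.add_pos hG hCi.le)).1
    ⟨h.marginalProfit_eq_zero hG hCi hCj hsum (by linarith),
      h.symm.marginalProfit_eq_zero hG hCj hCi (by linarith) (by linarith)⟩, ?_, ?_⟩
  · have hxi : 0 ≤ 1 + Cj - Ci := by linarith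
    have hxj : 0 ≤ 1 + Ci - Cj := by linarith
    refine isInvestmentNE_of_marginalProfit_eq_zero hG.ne' (by positivity) (by positivity)
      hS ?_ hi hj
    rw [hsum_eq]
    exact mul_le_mul_of_nonneg_left (exp_le_exp.2 (by linarith)) hG.le
  · rw [invProfit_eq_mul_add_marginalProfit, hi, add_zero, hsum_eq]
    field_simp
  · rw [invProfit_eq_mul_add_marginalProfit, hj, add_zero,
      add_comm ((1 + Ci - Cj) * G * E / 2), hsum_eq]
    field_simp
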